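/- arXiv:2109.14484 — 7 statements merged into one kernel-verified Lean document; each statement's English description precedes it below -/
import Mathlib

section
/- Let Q : ℝ → ℝ be a smooth, rapidly decaying function (Schwartz-class) satisfying c·Q'''' + (c−1)·Q − Q^(p+1)/(p+1) = 0 on ℝ with c real and p a positive integer. Then the Pohozaev identity holds: (3c/2)·∫(Q'')² − ((c−1)/2)·∫Q² = −(1/((p+1)(p+2)))·∫Q^(p+2). -/
open MeasureTheory SchwartzMap

/-! Multiply the equation by `x Q'(x)` and integrate. Since `x Q^n Q' = x (Q^(n+1))' / (n+1)` and
`∫ x h' = -∫ h` for Schwartz `h`, the lower-order terms give `-(1/(n+1)) ∫ Q^(n+1)`; two further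
integrations by parts turn `∫ x Q' Q''''` into `(3/2) ∫ (Q'')²`. -/

namespace SchwartzMap

variable (f g : 𝓢(ℝ, ℝ))

theorem coe_derivCLM : ⇑(derivCLM ℝ ℝ f) = deriv f := rfl

theorem coe_iterate_derivCLM (n : ℕ) : ⇑((derivCLM ℝ ℝ)^[n] f) = iteratedDeriv n f := by
  induction n with
  | zero => simp
  | succ n ih => rw [Function.iterate_succ_apply', coe_derivCLM, ih, iteratedDeriv_succ]

theorem smulLeftCLM_id_apply : ⇑(smulLeftCLM ℝ (fun x : ℝ => x) f) = fun x => x * f x :=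
  smulLeftCLM_apply (by fun_prop) f

theorem smulLeftCLM_pow_apply (n : ℕ) :
    ⇑(smulLeftCLM ℝ (fun x => f x ^ n) g) = fun x => f x ^ n * g x :=
  smulLeftCLM_apply (by fun_prop) g

theorem integrable_mul : Integrable fun x => f x * g x :=
  (pairing (ContinuousLinearMap.mul ℝ ℝ) f g).integrable

theorem integrable_id_mul : Integrable fun x : ℝ => x * f x :=
  smulLeftCLM_id_apply f ▸ (smulLeftCLM ℝ _ f).integrable

theorem integrable_id_mul_mul : Integrable fun x : ℝ => x * (f x * g x) :=
  integrable_id_mul (pairing (ContinuousLinearMap.mul ℝ ℝ) f g)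

theorem integrable_id_mul_pow_mul (n : ℕ) : Integrable fun x : ℝ => x * (f x ^ n * g x) := by
  simpa only [smulLeftCLM_pow_apply] using integrable_id_mul (smulLeftCLM ℝ (fun x => f x ^ n) g)

theorem integral_id_mul_deriv : ∫ x, x * deriv f x = -∫ x, f x := by
  simpa using integral_mul_deriv_eq_deriv_mul_of_integrable (u' := fun _ => 1)
    (fun x _ => hasDerivAt_id' x) (fun x _ => f.hasDerivAt x)
    (integrable_id_mul (derivCLM ℝ ℝ f)) (by simpa [Pi.mul_def] using f.integrable (μ := volume))
    (integrable_id_mul f)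

theorem integral_id_mul_mul_deriv :
    ∫ x, x * (f x * deriv g x) = -(∫ x, f x * g x) - ∫ x, x * (deriv f x * g x) := by
  set xf := smulLeftCLM ℝ (fun x : ℝ => x) f
  have hxf' : ∀ x, deriv xf x = f x + x * deriv f x := fun x => by
    rw [smulLeftCLM_id_apply, ((hasDerivAt_id' x).fun_mul (f.hasDerivAt x)).deriv, one_mul]
  have hibp : ∫ x, xf x * deriv g x = -∫ x, deriv xf x * g x :=
    integral_mul_deriv_eq_neg_deriv_mul xf g
  simp only [hxf'] at hibp
  simp only [xf, smulLeftCLM_id_apply, add_mul, mul_assoc] at hibp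
  have hint : Integrable fun x => x * (deriv f x * g x) := by
    simpa only [coe_derivCLM] using integrable_id_mul_mul (derivCLM ℝ ℝ f) g
  rw [hibp, integral_add (integrable_mul f g) hint]
  ring

theorem integral_id_mul_pow_mul_deriv (n : ℕ) :
    ∫ x, x * (f x ^ n * deriv f x) = -(1 / (n + 1)) * ∫ x, f x ^ (n + 1) := by
  set F := smulLeftCLM ℝ (fun x => f x ^ n) f
  have hF : ⇑F = fun x => f x ^ (n + 1) := by
    rw [smulLeftCLM_pow_apply]
    simp only [pow_succ]
  have hF' : ∀ x, x * deriv F x = (n + 1) * (x * (f x ^ n * deriv f x)) := fun x => by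
    rw [hF, ((f.hasDerivAt x).fun_pow (n + 1)).deriv]
    push_cast
    ring
  have virial := integral_id_mul_deriv F
  simp only [hF'] at virial
  rw [integral_const_mul, hF] at virial
  generalize ∫ x, x * (f x ^ n * deriv f x) = I at virial ⊢
  field_simp
  linarith

theorem integral_id_mul_mul_iteratedDeriv_three :
    ∫ x, x * (f x * iteratedDeriv 3 f x) = 3 / 2 * ∫ x, deriv f x ^ 2 := by
  have h₃ : iteratedDeriv 3 f = deriv (deriv (deriv f)) := by rw [iteratedDeriv_eq_iterate]; rfl
  have h₁₁ := integral_id_mul_pow_mul_deriv (derivCLM ℝ ℝ f) 1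
  have h₀₂ := integral_mul_deriv_eq_neg_deriv_mul f (derivCLM ℝ ℝ f)
  have hibp := integral_id_mul_mul_deriv f (derivCLM ℝ ℝ (derivCLM ℝ ℝ f))
  simp only [coe_derivCLM, pow_one] at h₁₁ h₀₂ hibp
  rw [h₃, hibp, h₁₁, h₀₂]
  norm_num [sq]
  ring

end SchwartzMap

theorem rosenau_pohozaev_identity_general
    (Q : 𝓢(ℝ, ℝ)) (c : ℝ) (p : ℕ)
    (hODE : ∀ x : ℝ, c * iteratedDeriv 4 Q x + (c - 1) * Q x
      - (Q x) ^ (p + 1) / ((p : ℝ) + 1) = 0) :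
    (3 * c / 2) * (∫ x : ℝ, (iteratedDeriv 2 Q x) ^ 2)
      - ((c - 1) / 2) * (∫ x : ℝ, (Q x) ^ 2)
      = -(1 / (((p : ℝ) + 1) * ((p : ℝ) + 2))) * ∫ x : ℝ, (Q x) ^ (p + 2) := by
  have h₂ : iteratedDeriv 2 Q = deriv (deriv Q) := by rw [iteratedDeriv_eq_iterate]; rfl
  have h₄ : iteratedDeriv 4 Q = iteratedDeriv 3 (deriv Q) := iteratedDeriv_succ'
  have hA := integral_id_mul_mul_iteratedDeriv_three (derivCLM ℝ ℝ Q)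
  have hB := integral_id_mul_pow_mul_deriv Q 1
  have hC := integral_id_mul_pow_mul_deriv Q (p + 1)
  have intA : Integrable fun x => x * (deriv Q x * iteratedDeriv 3 (deriv Q) x) := by
    simpa only [coe_derivCLM, coe_iterate_derivCLM] using
      integrable_id_mul_mul (derivCLM ℝ ℝ Q) ((derivCLM ℝ ℝ)^[3] (derivCLM ℝ ℝ Q))
  have intB := integrable_id_mul_pow_mul Q (derivCLM ℝ ℝ Q) 1
  have intC := integrable_id_mul_pow_mul Q (derivCLM ℝ ℝ Q) (p + 1)
  simp only [coe_derivCLM] at hA intB intC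
  have hmultiplied : ∫ x, (c * (x * (deriv Q x * iteratedDeriv 3 (deriv Q) x))
      + (c - 1) * (x * (Q x ^ 1 * deriv Q x))
      - 1 / ((p : ℝ) + 1) * (x * (Q x ^ (p + 1) * deriv Q x))) = 0 := by
    rw [← integral_zero ℝ ℝ]
    congr 1 with x
    rw [← h₄]
    linear_combination (x * deriv Q x) * hODE x
  rw [integral_sub ((intA.const_mul c).fun_add (intB.const_mul (c - 1))) (intC.const_mul _),
    integral_add (intA.const_mul c) (intB.const_mul (c - 1)), integral_const_mul,
    integral_const_mul, integral_const_mul, hA, hB, hC] at hmultiplied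
  push_cast [add_assoc, one_add_one_eq_two] at hmultiplied
  rw [h₂, ← one_div_mul_one_div]
  linear_combination hmultiplied

theorem rosenau_pohozaev_identity
    (Q : 𝓢(ℝ, ℝ)) (c : ℝ) (p : ℕ) (hp : 0 < p)
    (hODE : ∀ x : ℝ, c * iteratedDeriv 4 Q x + (c - 1) * Q x
      - (Q x) ^ (p + 1) / ((p : ℝ) + 1) = 0) :
    (3 * c / 2) * (∫ x : ℝ, (iteratedDeriv 2 Q x) ^ 2)
      - ((c - 1) / 2) * (∫ x : ℝ, (Q x) ^ 2)
      = -(1 / (((p : ℝ) + 1) * ((p : ℝ) + 2))) * ∫ x : ℝ, (Q x) ^ (p + 2) :=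
  rosenau_pohozaev_identity_general Q c p hODE
end

section
/- Let c < 0 and p a positive even integer. If Q : ℝ → ℝ is smooth, rapidly decaying, and satisfies c·Q'''' + (c−1)·Q − Q^(p+1)/(p+1) = 0 on ℝ, then Q is identically zero. -/
/-!
Multiplying the equation by `Q` and integrating by parts twice gives the energy identity
`(1 - c) ∫ Q² = c ∫ (Q'')² - (∫ Q^(p+2)) / (p + 1)`.
For `c < 0` and even `p` the left side is nonnegative and the right side nonpositive,
so `∫ Q² = 0`, and a continuous function with vanishing `L²` norm is zero.
-/

open SchwartzMap MeasureTheory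

namespace SchwartzMap

section Deriv

variable {F : Type*} [NormedAddCommGroup F] [NormedSpace ℝ F]

theorem iteratedDeriv_eq_iterate_derivCLM (f : 𝓢(ℝ, F)) (n : ℕ) :
    iteratedDeriv n f = ⇑((derivCLM ℝ F)^[n] f) := by
  induction n generalizing f with
  | zero => rfl
  | succ n ih =>
    rw [iteratedDeriv_succ', Function.iterate_succ_apply, ← ih]
    congr 1

end Deriv

section Mul

variable {𝕜 : Type*} [NormedRing 𝕜] [NormedSpace ℝ 𝕜] [IsScalarTower ℝ 𝕜 𝕜] [SMulCommClass ℝ 𝕜 𝕜]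

theorem integral_mul_derivCLM_derivCLM (f g : 𝓢(ℝ, 𝕜)) :
    ∫ x, f x * derivCLM ℝ 𝕜 (derivCLM ℝ 𝕜 g) x =
      ∫ x, derivCLM ℝ 𝕜 (derivCLM ℝ 𝕜 f) x * g x := by
  have h₁ := integral_mul_deriv_eq_neg_deriv_mul f (derivCLM ℝ 𝕜 g)
  have h₂ := integral_mul_deriv_eq_neg_deriv_mul (derivCLM ℝ 𝕜 f) g
  simp only [derivCLM_apply] at h₁ h₂ ⊢
  rw [h₁, h₂, neg_neg]

theorem integrable_mul_s4 {D : Type*} [NormedAddCommGroup D] [NormedSpace ℝ D] [MeasurableSpace D]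
    [BorelSpace D] [SecondCountableTopology D] {μ : Measure D} [μ.HasTemperateGrowth]
    (f g : 𝓢(D, 𝕜)) : Integrable (fun x ↦ f x * g x) μ :=
  (pairing (ContinuousLinearMap.mul ℝ 𝕜) f g).integrable

end Mul

section Real

theorem integral_mul_iteratedDeriv_four (f : 𝓢(ℝ, ℝ)) :
    ∫ x, f x * iteratedDeriv 4 f x = ∫ x, iteratedDeriv 2 f x ^ 2 := by
  simp only [iteratedDeriv_eq_iterate_derivCLM, Function.iterate_succ_apply',
    Function.iterate_zero_apply, sq]
  exact integral_mul_derivCLM_derivCLM _ _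

variable {D : Type*} [NormedAddCommGroup D] [NormedSpace ℝ D] [MeasurableSpace D]
    [BorelSpace D] [SecondCountableTopology D] {μ : Measure D} [μ.HasTemperateGrowth]

theorem integrable_pow (f : 𝓢(D, ℝ)) {n : ℕ} (hn : n ≠ 0) : Integrable (fun x ↦ f x ^ n) μ := by
  obtain ⟨m, rfl⟩ := Nat.exists_eq_succ_of_ne_zero hn
  simp only [pow_succ]
  refine f.integrable.bdd_mul (c := SchwartzMap.seminorm ℝ 0 0 f ^ m)
    (f.continuous.pow m).aestronglyMeasurable (Filter.Eventually.of_forall fun x ↦ ?_)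
  rw [norm_pow]
  exact pow_le_pow_left₀ (norm_nonneg _) (norm_le_seminorm ℝ f x) m

theorem eq_zero_of_integral_sq_eq_zero [μ.IsOpenPosMeasure] (f : 𝓢(D, ℝ))
    (h : ∫ x, f x ^ 2 ∂μ = 0) : f = 0 := by
  rw [integral_eq_zero_iff_of_nonneg (fun x ↦ sq_nonneg (f x)) (f.integrable_pow two_ne_zero),
    Continuous.ae_eq_iff_eq μ (by fun_prop) (continuous_zero (X := D) (M := ℝ))] at h
  ext x
  simpa using congrFun h x

end Real

end SchwartzMap

theorem rosenau_no_solitary_wave_of_negative_speed_even_p_general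
    (Q : 𝓢(ℝ, ℝ)) (c : ℝ) (p : ℕ) (hpe : Even p)
    (hc : c < 0)
    (hODE : ∀ x : ℝ, c * iteratedDeriv 4 Q x + (c - 1) * Q x
      - (Q x) ^ (p + 1) / ((p : ℝ) + 1) = 0) :
    ∀ x : ℝ, Q x = 0 := by
  have hpoint : ∀ x, (1 - c) * Q x ^ 2 =
      c * (Q x * iteratedDeriv 4 Q x) - Q x ^ (p + 2) / ((p : ℝ) + 1) := fun x ↦ by
    linear_combination (-Q x) * hODE x
  have henergy : (1 - c) * (∫ x, Q x ^ 2) =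
      c * (∫ x, iteratedDeriv 2 Q x ^ 2) - (∫ x, Q x ^ (p + 2)) / ((p : ℝ) + 1) := by
    rw [← integral_mul_iteratedDeriv_four, ← integral_const_mul, ← integral_const_mul,
      ← integral_div, ← integral_sub, integral_congr_ae (.of_forall hpoint)]
    · rw [iteratedDeriv_eq_iterate_derivCLM]
      exact (integrable_mul_s4 Q _).const_mul c
    · exact (Q.integrable_pow (by omega)).div_const _
  have hQ2 : 0 ≤ ∫ x, Q x ^ 2 := integral_nonneg fun x ↦ sq_nonneg (Q x)
  have hQ''2 : 0 ≤ ∫ x, iteratedDeriv 2 Q x ^ 2 := integral_nonneg fun x ↦ sq_nonneg _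
  have hQp : 0 ≤ ∫ x, Q x ^ (p + 2) := integral_nonneg fun x ↦ (hpe.add even_two).pow_nonneg _
  have hQ2_zero : ∫ x, Q x ^ 2 = 0 := by
    have hp1 : (0 : ℝ) < p + 1 := by positivity
    have hnonpos : (1 - c) * (∫ x, Q x ^ 2) ≤ 0 := by
      rw [henergy]
      linarith [mul_nonpos_of_nonpos_of_nonneg hc.le hQ''2, div_nonneg hQp hp1.le]
    exact le_antisymm (nonpos_of_mul_nonpos_right hnonpos (by linarith)) hQ2
  simp [eq_zero_of_integral_sq_eq_zero Q hQ2_zero]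

theorem rosenau_no_solitary_wave_of_negative_speed_even_p
    (Q : 𝓢(ℝ, ℝ)) (c : ℝ) (p : ℕ) (hp : 0 < p) (hpe : Even p)
    (hc : c < 0)
    (hODE : ∀ x : ℝ, c * iteratedDeriv 4 Q x + (c - 1) * Q x
      - (Q x) ^ (p + 1) / ((p : ℝ) + 1) = 0) :
    ∀ x : ℝ, Q x = 0 :=
  rosenau_no_solitary_wave_of_negative_speed_even_p_general Q c p hpe hc hODE
end

section
/- For any constants c, k ≠ 0 and ξ₀, the function u(x,t) = (c−k)/(2k) + 840·c·k³/(k·x − c·t − ξ₀)⁴ satisfies the Rosenau equation u_t + u_x + (u²)_x + u_xxxxt = 0 at every point (x,t) with k·x − c·t − ξ₀ ≠ 0. -/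
/-!
Substituting `u x t = φ (k * x - c * t - ξ₀)` reduces the equation to the profile ODE
`(k - c) φ' + 2 k φ φ' - c k⁴ φ⁽⁵⁾ = 0`. For `φ ξ = A + B ξ⁻⁴` the `ξ⁻⁵` terms cancel iff
`2 k A = c - k`, and the `ξ⁻⁹` terms iff `8 k B² = 6720 c k⁴ B`, i.e. `B = 840 c k³`.
-/

open Finset

section AffineChangeOfVariable

variable {𝕜 F : Type*} [NontriviallyNormedField 𝕜] [NormedAddCommGroup F] [NormedSpace 𝕜 F]

-- No differentiability is needed: where `f` is not differentiable both sides are `0`.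
theorem deriv_comp_mul_add (f : 𝕜 → F) (a b x : 𝕜) :
    deriv (fun y => f (a * y + b)) x = a • deriv f (a * x + b) := by
  rw [← deriv_comp_add_const]
  exact deriv_comp_mul_left a (fun z => f (z + b)) x

theorem iteratedDeriv_comp_mul_add (f : 𝕜 → F) (a b : 𝕜) (n : ℕ) :
    iteratedDeriv n (fun y => f (a * y + b)) = fun x => a ^ n • iteratedDeriv n f (a * x + b) := by
  induction n with
  | zero => simp
  | succ n ih =>
    funext x
    rw [iteratedDeriv_succ, ih, deriv_fun_const_smul_field, deriv_comp_mul_add, smul_smul,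
      ← pow_succ, iteratedDeriv_succ]

end AffineChangeOfVariable

theorem iteratedDeriv_const_add_mul_zpow {𝕜 : Type*} [NontriviallyNormedField 𝕜]
    (A B : 𝕜) (m : ℤ) {n : ℕ} (hn : 0 < n) (ξ : 𝕜) :
    iteratedDeriv n (fun ξ => A + B * ξ ^ m) ξ
      = B * (∏ i ∈ range n, ((m : 𝕜) - i)) * ξ ^ (m - n) := by
  rw [iteratedDeriv_const_add hn, iteratedDeriv_const_mul_field, iteratedDeriv_eq_iterate,
    iter_deriv_zpow, mul_assoc]

noncomputable def rosenauOperator (u : ℝ → ℝ → ℝ) (x t : ℝ) : ℝ :=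
  deriv (fun s => u x s) t + deriv (fun y => u y t) x + deriv (fun y => u y t ^ 2) x
    + deriv (fun s => iteratedDeriv 4 (fun y => u y s) x) t

theorem rosenauOperator_travelingWave (φ : ℝ → ℝ) (k c ξ₀ x t : ℝ)
    (hφ : DifferentiableAt ℝ φ (k * x - c * t - ξ₀)) :
    rosenauOperator (fun x t => φ (k * x - c * t - ξ₀)) x t
      = (k - c) * deriv φ (k * x - c * t - ξ₀)
        + 2 * k * φ (k * x - c * t - ξ₀) * deriv φ (k * x - c * t - ξ₀)
        - c * k ^ 4 * iteratedDeriv 5 φ (k * x - c * t - ξ₀) := by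
  set ξ := k * x - c * t - ξ₀
  have in_t (s : ℝ) : k * x - c * s - ξ₀ = -c * s + (k * x - ξ₀) := by ring
  have in_x (y s : ℝ) : k * y - c * s - ξ₀ = k * y + (-(c * s) - ξ₀) := by ring
  have hξt : -c * t + (k * x - ξ₀) = ξ := by ring
  have hξx : k * x + (-(c * t) - ξ₀) = ξ := by ring
  have u_t : deriv (fun s => φ (k * x - c * s - ξ₀)) t = -c * deriv φ ξ := by
    simp only [in_t, deriv_comp_mul_add, hξt, smul_eq_mul]
  have u_x : deriv (fun y => φ (k * y - c * t - ξ₀)) x = k * deriv φ ξ := by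
    simp only [in_x, deriv_comp_mul_add, hξx, smul_eq_mul]
  have u_sq_x : deriv (fun y => φ (k * y - c * t - ξ₀) ^ 2) x = k * (2 * φ ξ * deriv φ ξ) := by
    simp only [in_x, deriv_comp_mul_add (fun ξ => φ ξ ^ 2), hξx, smul_eq_mul]
    rw [(hφ.hasDerivAt.fun_pow 2).deriv]
    push_cast
    ring
  have u_xxxxt : deriv (fun s => iteratedDeriv 4 (fun y => φ (k * y - c * s - ξ₀)) x) t
      = -c * k ^ 4 * iteratedDeriv 5 φ ξ := by
    have u_xxxx (s : ℝ) : iteratedDeriv 4 (fun y => φ (k * y - c * s - ξ₀)) x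
        = k ^ 4 * iteratedDeriv 4 φ (k * x - c * s - ξ₀) := by
      simp only [in_x, iteratedDeriv_comp_mul_add, smul_eq_mul]
    simp only [u_xxxx, deriv_const_mul_field', in_t, deriv_comp_mul_add, hξt, smul_eq_mul,
      ← iteratedDeriv_succ]
    ring
  rw [rosenauOperator, u_t, u_x, u_sq_x, u_xxxxt]
  ring

theorem rosenau_profile_ode_of_eq_rational (k c A B ξ : ℝ) (φ : ℝ → ℝ)
    (hφ : φ = fun ξ => A + B * ξ ^ (-4 : ℤ)) (hA : 2 * k * A = c - k) (hB : B = 840 * c * k ^ 3) :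
    (k - c) * deriv φ ξ + 2 * k * φ ξ * deriv φ ξ - c * k ^ 4 * iteratedDeriv 5 φ ξ = 0 := by
  have φ' := iteratedDeriv_const_add_mul_zpow A B (-4) one_pos ξ
  have φ₅ := iteratedDeriv_const_add_mul_zpow A B (-4) (by norm_num : 0 < 5) ξ
  rw [iteratedDeriv_one] at φ'
  subst hφ
  simp only [φ', φ₅, prod_range_succ, prod_range_zero]
  norm_num [zpow_neg, ← inv_pow]
  linear_combination (-4 * B * ξ⁻¹ ^ 5) * hA - 8 * k * B * ξ⁻¹ ^ 9 * hB

theorem rosenau_rational_traveling_wave_general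
    (c k ξ₀ : ℝ) (hk : k ≠ 0) :
    ∀ x t : ℝ, k * x - c * t - ξ₀ ≠ 0 →
      (letI u : ℝ → ℝ → ℝ := fun x t =>
        (c - k) / (2 * k) + 840 * c * k ^ 3 / (k * x - c * t - ξ₀) ^ 4
      deriv (fun s => u x s) t
        + deriv (fun y => u y t) x
        + deriv (fun y => (u y t) ^ 2) x
        + deriv (fun s => iteratedDeriv 4 (fun y => u y s) x) t = 0) := by
  intro x t hξ
  set φ : ℝ → ℝ := fun ξ => (c - k) / (2 * k) + 840 * c * k ^ 3 * ξ ^ (-4 : ℤ) with hφ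
  have u_eq : (fun x t => (c - k) / (2 * k) + 840 * c * k ^ 3 / (k * x - c * t - ξ₀) ^ 4)
      = fun x t => φ (k * x - c * t - ξ₀) := by
    simp only [hφ, zpow_neg, zpow_ofNat, div_eq_mul_inv]
  have hφ_diff : DifferentiableAt ℝ φ (k * x - c * t - ξ₀) :=
    ((differentiableAt_zpow.2 (Or.inl hξ)).const_mul _).const_add _
  have hA : 2 * k * ((c - k) / (2 * k)) = c - k := by field_simp
  rw [u_eq]
  exact (rosenauOperator_travelingWave φ k c ξ₀ x t hφ_diff).trans
    (rosenau_profile_ode_of_eq_rational k c _ _ _ φ hφ hA rfl)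

theorem rosenau_rational_traveling_wave
    (c k ξ₀ : ℝ) (hc : c ≠ 0) (hk : k ≠ 0) :
    ∀ x t : ℝ, k * x - c * t - ξ₀ ≠ 0 →
      (letI u : ℝ → ℝ → ℝ := fun x t =>
        (c - k) / (2 * k) + 840 * c * k ^ 3 / (k * x - c * t - ξ₀) ^ 4
      deriv (fun s => u x s) t
        + deriv (fun y => u y t) x
        + deriv (fun y => (u y t) ^ 2) x
        + deriv (fun s => iteratedDeriv 4 (fun y => u y s) x) t = 0) :=
  rosenau_rational_traveling_wave_general c k ξ₀ hk
end

section
/- Let F : ℝ → ℝ be C⁴ and define u(x,t) = −1/2 + F(x)/t for t > 0. Then u satisfies u_t + u_x + (u²)_x + u_xxxxt = 0 on ℝ × (0,∞) if and only if F⁽⁴⁾ − (F²)' + F = 0 on ℝ. -/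
/-!
Substituting the scaling ansatz `u = -1/2 + F(x)/t` into the Rosenau equation, every term of the
left-hand side is a multiple of `1/t` or `1/t²`.  The `1/t` terms are `F'/t` from `u_x` and
`2 · (-1/2) · F'/t` from `(u²)_x`, which cancel exactly because of the constant `-1/2`; what remains
is `-(F⁗ - (F²)' + F)/t²`, which vanishes for one (equivalently every) `t > 0` iff the reduced
ODE holds at `x`.
-/

lemma iteratedDeriv_const_add_div_const {𝕜 : Type*} [NontriviallyNormedField 𝕜] {n : ℕ}
    (hn : 0 < n) (c s : 𝕜) (F : 𝕜 → 𝕜) (x : 𝕜) :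
    iteratedDeriv n (fun y => c + F y / s) x = iteratedDeriv n F x / s := by
  rw [iteratedDeriv_const_add hn, iteratedDeriv_div_const]

lemma deriv_sq_neg_half_add_div_const {F : ℝ → ℝ} {x : ℝ} (hF : DifferentiableAt ℝ F x)
    {t : ℝ} (ht : t ≠ 0) :
    deriv (fun y => (-(1 / 2) + F y / t) ^ 2) x
      = -(deriv F x / t) + deriv (fun y => F y ^ 2) x / t ^ 2 := by
  have hu : HasDerivAt (fun y => -(1 / 2) + F y / t) (deriv F x / t) x :=
    (hF.hasDerivAt.div_const t).const_add _
  rw [(hu.fun_pow 2).deriv, (hF.hasDerivAt.fun_pow 2).deriv]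
  norm_num
  field_simp

lemma rosenau_lhs_scaling_ansatz {F : ℝ → ℝ} {x : ℝ} (hF : DifferentiableAt ℝ F x)
    {t : ℝ} (ht : t ≠ 0) :
    deriv (fun s => -(1 / 2) + F x / s) t
      + deriv (fun y => -(1 / 2) + F y / t) x
      + deriv (fun y => (-(1 / 2) + F y / t) ^ 2) x
      + deriv (fun s => iteratedDeriv 4 (fun y => -(1 / 2) + F y / s) x) t
    = -(iteratedDeriv 4 F x - deriv (fun y => F y ^ 2) x + F x) / t ^ 2 := by
  simp only [iteratedDeriv_const_add_div_const four_pos]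
  rw [deriv_const_add', deriv_const_div_id, deriv_const_add', deriv_div_const,
    deriv_sq_neg_half_add_div_const hF ht, deriv_const_div_id]
  ring

theorem rosenau_reduction_scaling
    (F : ℝ → ℝ) (hF : ContDiff ℝ 4 F) :
    (∀ x t : ℝ, 0 < t →
      (letI u : ℝ → ℝ → ℝ := fun x t => -(1 / 2) + F x / t
      deriv (fun s => u x s) t
        + deriv (fun y => u y t) x
        + deriv (fun y => (u y t) ^ 2) x
        + deriv (fun s => iteratedDeriv 4 (fun y => u y s) x) t = 0))
    ↔ (∀ x : ℝ, iteratedDeriv 4 F x - deriv (fun y => (F y) ^ 2) x + F x = 0) := by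
  have hFd : Differentiable ℝ F := hF.differentiable (by norm_num)
  constructor
  · intro h x
    have h1 := h x 1 one_pos
    rw [rosenau_lhs_scaling_ansatz (hFd x) one_ne_zero] at h1
    simp only [div_one, one_pow] at h1
    linarith
  · intro h x t ht
    rw [rosenau_lhs_scaling_ansatz (hFd x) ht.ne', h x, neg_zero, zero_div]
end

section
/- Let F : ℝ → ℝ be C⁵, c̃ ∈ ℝ, and define u(x,t) = −1/2 + (1/t)·F(x − c̃·ln t) for t > 0. Then u satisfies u_t + u_x + (u²)_x + u_xxxxt = 0 on ℝ × (0,∞) if and only if c̃·F⁽⁵⁾ + F⁽⁴⁾ + (c̃·F − F²)' + F = 0 on ℝ. -/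
/-!
Write `ξ = x - c̃ log t` and `u = -1/2 + F(ξ)/t`. The time derivative of `G(ξ)/t` is
`-(G(ξ) + c̃ G'(ξ))/t²` (used for `G = F` and `G = F⁽⁴⁾`), and `(u²)_x = 2 u u_x` equals
`-F'(ξ)/t + 2 F(ξ) F'(ξ)/t²`, whose first part cancels `u_x = F'(ξ)/t`. So the Rosenau residual
at `(x, t)` is `-t⁻²` times the profile residual at `ξ`, and `t = 1` already reaches every `ξ`.
-/

open Real

namespace Rosenau

noncomputable def residual (u : ℝ → ℝ → ℝ) (x t : ℝ) : ℝ :=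
  deriv (fun s => u x s) t + deriv (fun y => u y t) x + deriv (fun y => (u y t) ^ 2) x
    + deriv (fun s => iteratedDeriv 4 (fun y => u y s) x) t

noncomputable def logScalingAnsatz (F : ℝ → ℝ) (ct : ℝ) (x t : ℝ) : ℝ :=
  -(1 / 2) + (1 / t) * F (x - ct * log t)

noncomputable def profileResidual (F : ℝ → ℝ) (ct ξ : ℝ) : ℝ :=
  ct * iteratedDeriv 5 F ξ + iteratedDeriv 4 F ξ + deriv (fun y => ct * F y - (F y) ^ 2) ξ + F ξ

lemma iteratedDeriv_const_add_mul_comp_sub {n : ℕ} (hn : 0 < n) (F : ℝ → ℝ) (c b a x : ℝ) :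
    iteratedDeriv n (fun y => c + b * F (y - a)) x = b * iteratedDeriv n F (x - a) := by
  rw [iteratedDeriv_const_add hn, iteratedDeriv_const_mul_field, iteratedDeriv_comp_sub_const]

lemma hasDerivAt_one_div_mul_comp_log {G : ℝ → ℝ} {G' x ct t : ℝ} (ht : t ≠ 0)
    (hG : HasDerivAt G G' (x - ct * log t)) :
    HasDerivAt (fun s => 1 / s * G (x - ct * log s))
      (-(t ^ 2)⁻¹ * (G (x - ct * log t) + ct * G')) t := by
  have hinv : HasDerivAt (fun s : ℝ => 1 / s) (-(t ^ 2)⁻¹) t := by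
    simpa only [one_div] using hasDerivAt_inv ht
  have harg : HasDerivAt (fun s => x - ct * log s) (-(ct * t⁻¹)) t :=
    ((hasDerivAt_log ht).const_mul ct).const_sub x
  refine (hinv.fun_mul (hG.comp t harg)).congr_deriv ?_
  simp only [Function.comp_apply]
  field_simp
  ring

theorem residual_logScalingAnsatz {F : ℝ → ℝ} (hF : ContDiff ℝ 5 F) (ct x : ℝ) {t : ℝ}
    (ht : 0 < t) :
    residual (logScalingAnsatz F ct) x t
      = -(t ^ 2)⁻¹ * profileResidual F ct (x - ct * log t) := by
  set ξ := x - ct * log t with hξ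
  have hF' : HasDerivAt F (deriv F ξ) ξ :=
    (hF.differentiable (by norm_num) ξ).hasDerivAt
  have hF5 : HasDerivAt (iteratedDeriv 4 F) (iteratedDeriv 5 F ξ) ξ := by
    rw [iteratedDeriv_succ (n := 4)]
    exact (hF.differentiable_iteratedDeriv 4 (by norm_num) ξ).hasDerivAt
  have hu_t : HasDerivAt (fun s => logScalingAnsatz F ct x s)
      (-(t ^ 2)⁻¹ * (F ξ + ct * deriv F ξ)) t :=
    (hasDerivAt_one_div_mul_comp_log ht.ne' hF').const_add (-(1 / 2))
  have hu_x : HasDerivAt (fun y => logScalingAnsatz F ct y t) (1 / t * deriv F ξ) x := by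
    have := hF'.comp_sub_const x (ct * log t)
    exact (this.const_mul (1 / t)).const_add (-(1 / 2))
  have hu_sq : HasDerivAt (fun y => logScalingAnsatz F ct y t ^ 2)
      (2 * logScalingAnsatz F ct x t * (1 / t * deriv F ξ)) x := by
    simpa using hu_x.fun_pow 2
  have hu4 : (fun s => iteratedDeriv 4 (fun y => logScalingAnsatz F ct y s) x)
      = fun s => 1 / s * iteratedDeriv 4 F (x - ct * log s) := by
    funext s
    exact iteratedDeriv_const_add_mul_comp_sub (by norm_num) F _ _ _ x
  have hprofile :
      deriv (fun y => ct * F y - F y ^ 2) ξ = ct * deriv F ξ - 2 * F ξ * deriv F ξ := by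
    simpa using ((hF'.const_mul ct).fun_sub (hF'.fun_pow 2)).deriv
  rw [residual, profileResidual, hprofile, hu4, (hasDerivAt_one_div_mul_comp_log ht.ne' hF5).deriv,
    hu_sq.deriv, hu_x.deriv, hu_t.deriv, logScalingAnsatz, ← hξ]
  field_simp
  ring

end Rosenau

open Rosenau in
theorem rosenau_reduction_log_scaling
    (F : ℝ → ℝ) (hF : ContDiff ℝ 5 F) (ct : ℝ) :
    (∀ x t : ℝ, 0 < t →
      (letI u : ℝ → ℝ → ℝ := fun x t => -(1 / 2) + (1 / t) * F (x - ct * Real.log t)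
      deriv (fun s => u x s) t
        + deriv (fun y => u y t) x
        + deriv (fun y => (u y t) ^ 2) x
        + deriv (fun s => iteratedDeriv 4 (fun y => u y s) x) t = 0))
    ↔ (∀ ξ : ℝ, ct * iteratedDeriv 5 F ξ + iteratedDeriv 4 F ξ
        + deriv (fun y => ct * F y - (F y) ^ 2) ξ + F ξ = 0) := by
  change (∀ x t : ℝ, 0 < t → residual (logScalingAnsatz F ct) x t = 0)
    ↔ ∀ ξ, profileResidual F ct ξ = 0
  constructor
  · intro h ξ
    simpa [residual_logScalingAnsatz hF] using h ξ 1 one_pos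
  · intro h x t ht
    rw [residual_logScalingAnsatz hF ct x ht, h, mul_zero]
end

section
/- Let k, c be nonzero reals and F : ℝ → ℝ be C⁵. If u(x,t) = F(k·x − c·t) solves u_t + u_x + (u²)_x + u_xxxxt = 0 on ℝ², then there exist constants K₀, K₁ such that c·k⁴·(F'''·F' − (1/2)(F'')²) − (k/3)F³ + ((c−k)/2)F² + K₁·F + K₀ = 0 identically. -/
private lemma diff_iter (F : ℝ → ℝ) (hF : ContDiff ℝ 5 F) (n : ℕ) (hn : n < 5) :
    Differentiable ℝ (iteratedDeriv n F) := by
  apply hF.differentiable_iteratedDeriv n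
  exact_mod_cast hn

private lemma hda_iter (F : ℝ → ℝ) (hF : ContDiff ℝ 5 F) (n m : ℕ) (h : m = n + 1)
    (hm : m ≤ 5) (ξ : ℝ) : HasDerivAt (iteratedDeriv n F) (iteratedDeriv m F ξ) ξ := by
  subst h
  rw [iteratedDeriv_succ]
  exact ((diff_iter F hF n (by omega)) ξ).hasDerivAt

private lemma iter_affine (F : ℝ → ℝ) (hF : ContDiff ℝ 5 F) (a b : ℝ) :
    ∀ n : ℕ, n ≤ 4 → ∀ x : ℝ,
      iteratedDeriv n (fun y => F (a * y - b)) x = a ^ n * iteratedDeriv n F (a * x - b) := by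
  intro n
  induction n with
  | zero => intro _ x; simp
  | succ n IH =>
    intro hn x
    have hn4 : n ≤ 4 := by omega
    have hfun : iteratedDeriv n (fun y => F (a * y - b))
        = fun x => a ^ n * iteratedDeriv n F (a * x - b) := funext (IH hn4)
    rw [iteratedDeriv_succ, hfun]
    have hin : HasDerivAt (fun x : ℝ => a * x - b) a x := by
      simpa using ((hasDerivAt_id x).const_mul a).sub_const b
    have hd : HasDerivAt (iteratedDeriv n F) (iteratedDeriv (n + 1) F (a * x - b))
        (a * x - b) := hda_iter F hF n (n + 1) rfl (by omega) _
    have hcomp : HasDerivAt (fun x => a ^ n * iteratedDeriv n F (a * x - b))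
        (a ^ n * (iteratedDeriv (n + 1) F (a * x - b) * a)) x :=
      (hd.comp x hin).const_mul (a ^ n)
    rw [hcomp.deriv]; ring

theorem rosenau_traveling_wave_integrated_twice
    (F : ℝ → ℝ) (hF : ContDiff ℝ 5 F) (k c : ℝ) (hk : k ≠ 0) (hc : c ≠ 0)
    (hsol : ∀ x t : ℝ,
      (letI u : ℝ → ℝ → ℝ := fun x t => F (k * x - c * t)
      deriv (fun s => u x s) t
        + deriv (fun y => u y t) x
        + deriv (fun y => (u y t) ^ 2) x
        + deriv (fun s => iteratedDeriv 4 (fun y => u y s) x) t = 0)) :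
    ∃ K₀ K₁ : ℝ, ∀ ξ : ℝ,
      c * k ^ 4 * (iteratedDeriv 3 F ξ * deriv F ξ - (1 / 2) * (iteratedDeriv 2 F ξ) ^ 2)
        - (k / 3) * (F ξ) ^ 3 + ((c - k) / 2) * (F ξ) ^ 2 + K₁ * F ξ + K₀ = 0 := by
  have hF1 : Differentiable ℝ F := hF.differentiable (by norm_num)
  have hFd : ∀ y, HasDerivAt F (deriv F y) y := fun y => (hF1 y).hasDerivAt
  -- the ODE obtained from the PDE
  have ode : ∀ ξ : ℝ, (k - c) * deriv F ξ + 2 * k * F ξ * deriv F ξ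
      - c * k ^ 4 * iteratedDeriv 5 F ξ = 0 := by
    intro ξ
    have h := hsol (ξ / k) 0
    have hξ : k * (ξ / k) - c * 0 = ξ := by field_simp; ring
    simp only [hξ] at h
    set x := ξ / k with hx
    have hin_t : ∀ s : ℝ, HasDerivAt (fun s : ℝ => k * x - c * s) (-c) s := by
      intro s
      simpa using ((hasDerivAt_id s).const_mul c).const_sub (k * x)
    have hin_x : ∀ y : ℝ, HasDerivAt (fun y : ℝ => k * y - c * (0:ℝ)) k y := by
      intro y
      simpa using ((hasDerivAt_id y).const_mul k).sub_const (c * 0)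
    have h1 : deriv (fun s => F (k * x - c * s)) 0 = deriv F ξ * (-c) := by
      have h' : HasDerivAt (fun s => F (k * x - c * s)) (deriv F (k * x - c * 0) * (-c)) 0 :=
        (hFd (k * x - c * 0)).comp 0 (hin_t 0)
      rw [h'.deriv, hξ]
    have h2 : deriv (fun y => F (k * y - c * (0:ℝ))) x = deriv F ξ * k := by
      have h' : HasDerivAt (fun y => F (k * y - c * (0:ℝ))) (deriv F (k * x - c * 0) * k) x :=
        (hFd (k * x - c * 0)).comp x (hin_x x)
      rw [h'.deriv, hξ]
    have h3 : deriv (fun y => (F (k * y - c * (0:ℝ))) ^ 2) x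
        = 2 * F ξ * (deriv F ξ * k) := by
      have hc1 : HasDerivAt (fun y => F (k * y - c * (0:ℝ))) (deriv F ξ * k) x := by
        have h' : HasDerivAt (fun y => F (k * y - c * (0:ℝ))) (deriv F (k * x - c * 0) * k) x :=
          (hFd (k * x - c * 0)).comp x (hin_x x)
        rwa [hξ] at h'
      rw [(hc1.fun_pow 2).deriv, hξ]; ring
    have h4 : deriv (fun s => iteratedDeriv 4 (fun y => F (k * y - c * s)) x) 0
        = k ^ 4 * (iteratedDeriv 5 F ξ * (-c)) := by
      have heq : (fun s => iteratedDeriv 4 (fun y => F (k * y - c * s)) x)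
          = fun s => k ^ 4 * iteratedDeriv 4 F (k * x - c * s) := by
        funext s
        exact iter_affine F hF k (c * s) 4 (by norm_num) x
      rw [heq]
      have hd : HasDerivAt (iteratedDeriv 4 F) (iteratedDeriv 5 F (k * x - c * 0))
          (k * x - c * 0) := hda_iter F hF 4 5 rfl (by omega) _
      have hcomp : HasDerivAt (fun s => k ^ 4 * iteratedDeriv 4 F (k * x - c * s))
          (k ^ 4 * (iteratedDeriv 5 F (k * x - c * 0) * (-c))) 0 :=
        (hd.comp 0 (hin_t 0)).const_mul (k ^ 4)
      rw [hcomp.deriv, hξ]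
    rw [h1, h2, h3, h4] at h
    nlinarith [h]
  -- first integration
  set P : ℝ → ℝ := fun ξ => c * k ^ 4 * iteratedDeriv 4 F ξ - (k - c) * F ξ - k * (F ξ) ^ 2
    with hP
  have hPd : ∀ ξ, HasDerivAt P
      (c * k ^ 4 * iteratedDeriv 5 F ξ - (k - c) * deriv F ξ - k * (2 * F ξ * deriv F ξ)) ξ := by
    intro ξ
    have h4 : HasDerivAt (iteratedDeriv 4 F) (iteratedDeriv 5 F ξ) ξ :=
      hda_iter F hF 4 5 rfl (by omega) ξ
    have hsq : HasDerivAt (fun ξ => (F ξ) ^ 2) (2 * F ξ * deriv F ξ) ξ := by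
      have := (hFd ξ).fun_pow 2
      simpa [mul_comm, mul_assoc, mul_left_comm] using this
    exact ((h4.const_mul (c * k ^ 4)).sub ((hFd ξ).const_mul (k - c))).sub
      (hsq.const_mul k)
  have hPzero : ∀ ξ, deriv P ξ = 0 := by
    intro ξ
    rw [(hPd ξ).deriv]
    have := ode ξ
    linarith
  have hPdiff : Differentiable ℝ P := fun ξ => (hPd ξ).differentiableAt
  have hPconst : ∀ ξ, P ξ = P 0 := fun ξ => is_const_of_deriv_eq_zero hPdiff hPzero ξ 0
  set A : ℝ := P 0 with hA
  have key : ∀ ξ, c * k ^ 4 * iteratedDeriv 4 F ξ = (k - c) * F ξ + k * (F ξ) ^ 2 + A := by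
    intro ξ
    have h1 : c * k ^ 4 * iteratedDeriv 4 F ξ - (k - c) * F ξ - k * (F ξ) ^ 2 = A :=
      hPconst ξ
    linarith
  -- second integration
  set Q : ℝ → ℝ := fun ξ =>
    c * k ^ 4 * (iteratedDeriv 3 F ξ * deriv F ξ - (1 / 2) * (iteratedDeriv 2 F ξ) ^ 2)
      - (k / 3) * (F ξ) ^ 3 + ((c - k) / 2) * (F ξ) ^ 2 - A * F ξ with hQ
  have hd1 : ∀ ξ, HasDerivAt (deriv F) (iteratedDeriv 2 F ξ) ξ := by
    intro ξ
    rw [← iteratedDeriv_one]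
    exact hda_iter F hF 1 2 rfl (by omega) ξ
  have hd2 : ∀ ξ, HasDerivAt (iteratedDeriv 2 F) (iteratedDeriv 3 F ξ) ξ :=
    fun ξ => hda_iter F hF 2 3 rfl (by omega) ξ
  have hd3 : ∀ ξ, HasDerivAt (iteratedDeriv 3 F) (iteratedDeriv 4 F ξ) ξ :=
    fun ξ => hda_iter F hF 3 4 rfl (by omega) ξ
  have hQd : ∀ ξ, HasDerivAt Q
      (c * k ^ 4 * ((iteratedDeriv 4 F ξ * deriv F ξ + iteratedDeriv 3 F ξ * iteratedDeriv 2 F ξ)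
        - (1 / 2) * (2 * iteratedDeriv 2 F ξ * iteratedDeriv 3 F ξ))
      - (k / 3) * (3 * (F ξ) ^ 2 * deriv F ξ)
      + ((c - k) / 2) * (2 * F ξ * deriv F ξ) - A * deriv F ξ) ξ := by
    intro ξ
    have hprod : HasDerivAt (fun ξ => iteratedDeriv 3 F ξ * deriv F ξ)
        (iteratedDeriv 4 F ξ * deriv F ξ + iteratedDeriv 3 F ξ * iteratedDeriv 2 F ξ) ξ :=
      (hd3 ξ).mul (hd1 ξ)
    have hsq2 : HasDerivAt (fun ξ => (iteratedDeriv 2 F ξ) ^ 2)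
        (2 * iteratedDeriv 2 F ξ * iteratedDeriv 3 F ξ) ξ := by
      have := (hd2 ξ).fun_pow 2
      simpa [mul_comm, mul_assoc, mul_left_comm] using this
    have hcube : HasDerivAt (fun ξ => (F ξ) ^ 3) (3 * (F ξ) ^ 2 * deriv F ξ) ξ := by
      have := (hFd ξ).fun_pow 3
      simpa [mul_comm, mul_assoc, mul_left_comm] using this
    have hsqF : HasDerivAt (fun ξ => (F ξ) ^ 2) (2 * F ξ * deriv F ξ) ξ := by
      have := (hFd ξ).fun_pow 2
      simpa [mul_comm, mul_assoc, mul_left_comm] using this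
    exact ((((hprod.sub (hsq2.const_mul (1/2))).const_mul (c * k ^ 4)).sub
      (hcube.const_mul (k / 3))).add (hsqF.const_mul ((c - k) / 2))).sub
      ((hFd ξ).const_mul A)
  have hQzero : ∀ ξ, deriv Q ξ = 0 := by
    intro ξ
    rw [(hQd ξ).deriv]
    linear_combination (deriv F ξ) * key ξ
  have hQdiff : Differentiable ℝ Q := fun ξ => (hQd ξ).differentiableAt
  have hQconst : ∀ ξ, Q ξ = Q 0 := fun ξ => is_const_of_deriv_eq_zero hQdiff hQzero ξ 0
  refine ⟨-(Q 0), -A, fun ξ => ?_⟩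
  have hQξ : Q ξ =
      c * k ^ 4 * (iteratedDeriv 3 F ξ * deriv F ξ - (1 / 2) * (iteratedDeriv 2 F ξ) ^ 2)
        - (k / 3) * (F ξ) ^ 3 + ((c - k) / 2) * (F ξ) ^ 2 - A * F ξ := rfl
  have := hQconst ξ
  linear_combination this - hQξ
end

section
/- Let c₂ > 0 and set b = √(c₂/(3c₄)) for c₄ > 0 — equivalently consider the ODE (φ')² = c₄(φ² + a²)(φ² + b²) with a² = 2c₂/(3c₄), b² = c₂/(3c₄). If φ(ξ) = b·tn(ε√(2c₂/3)·(ξ − ξ₀), 1/√2) (Jacobi tangent function tn = sn/cn with modulus 1/√2), then (φ')² = c₀ + c₂φ² + c₄φ⁴ with c₀ = 2c₂²/(9c₄), wherever cn ≠ 0. -/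
/-!
From `sn² + cn² = 1` and `dn² + m·sn² = 1`, `tn = sn/cn` has `tn' = dn/cn²` and
`(tn')² = (1 + tn²)(1 + (1 - m)·tn²)`. For `m = 1/2` the rescaling `φ = b·tn(k(ξ - ξ₀))` with
`b² = c₂/(3c₄)`, `k² = 2c₂/3` turns this into `(φ')² = c₄(φ² + 2b²)(φ² + b²)`, which is the quartic.
-/

theorem hasDerivAt_sn_div_cn {sn cn dn : ℝ → ℝ} {u : ℝ}
    (hsn : HasDerivAt sn (cn u * dn u) u) (hcn : HasDerivAt cn (-(sn u * dn u)) u)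
    (hpyth : sn u ^ 2 + cn u ^ 2 = 1) (hcn0 : cn u ≠ 0) :
    HasDerivAt (fun x => sn x / cn x) (dn u / cn u ^ 2) u := by
  refine (hsn.div hcn hcn0).congr_deriv ?_
  linear_combination (dn u / cn u ^ 2) * hpyth

theorem jacobi_tn_deriv_sq {s c d m : ℝ} (hpyth : s ^ 2 + c ^ 2 = 1)
    (hdn : d ^ 2 + m * s ^ 2 = 1) (hc : c ≠ 0) :
    (d / c ^ 2) ^ 2 = (1 + (s / c) ^ 2) * (1 + (1 - m) * (s / c) ^ 2) := by
  field_simp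
  linear_combination hdn - (1 + c ^ 2 + s ^ 2 - m * s ^ 2) * hpyth

theorem rosenau_quartic_of_tn {c₂ c₄ b k t : ℝ} (hc₄ : c₄ ≠ 0)
    (hb : b ^ 2 = c₂ / (3 * c₄)) (hk : k ^ 2 = 2 * c₂ / 3) :
    (b * k) ^ 2 * ((1 + t ^ 2) * (1 + (1 - 1 / 2) * t ^ 2))
      = 2 * c₂ ^ 2 / (9 * c₄) + c₂ * (b * t) ^ 2 + c₄ * (b * t) ^ 4 := by
  rw [show (b * t) ^ 4 = (b ^ 2) ^ 2 * t ^ 4 by ring, mul_pow b t, mul_pow b k, hb, hk]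
  field_simp
  ring

theorem rosenau_caseIIf_tn_solution_general
    (c₂ c₄ ξ₀ ε : ℝ) (h₂ : 0 < c₂) (h₄ : 0 < c₄) (hε : ε = 1 ∨ ε = -1)
    (sn cn dn : ℝ → ℝ)
    (hsn : Differentiable ℝ sn) (hcn : Differentiable ℝ cn)
    (hsn' : ∀ x, deriv sn x = cn x * dn x)
    (hcn' : ∀ x, deriv cn x = -(sn x * dn x))
    (hid1 : ∀ x, (sn x) ^ 2 + (cn x) ^ 2 = 1)
    (hid2 : ∀ x, (dn x) ^ 2 + (1 / 2) * (sn x) ^ 2 = 1) :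
    letI b : ℝ := Real.sqrt (c₂ / (3 * c₄))
    letI φ : ℝ → ℝ := fun ξ =>
      b * (sn (ε * Real.sqrt (2 * c₂ / 3) * (ξ - ξ₀))
           / cn (ε * Real.sqrt (2 * c₂ / 3) * (ξ - ξ₀)))
    ∀ ξ : ℝ, cn (ε * Real.sqrt (2 * c₂ / 3) * (ξ - ξ₀)) ≠ 0 →
      (deriv φ ξ) ^ 2
        = 2 * c₂ ^ 2 / (9 * c₄) + c₂ * (φ ξ) ^ 2 + c₄ * (φ ξ) ^ 4 := by
  intro ξ hc
  set b := Real.sqrt (c₂ / (3 * c₄))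
  set k := ε * Real.sqrt (2 * c₂ / 3)
  set u := k * (ξ - ξ₀)
  have hb : b ^ 2 = c₂ / (3 * c₄) := Real.sq_sqrt (by positivity)
  have hk : k ^ 2 = 2 * c₂ / 3 := by
    rw [mul_pow, Real.sq_sqrt (by positivity)]
    rcases hε with rfl | rfl <;> ring
  have hlin : HasDerivAt (fun ξ => k * (ξ - ξ₀)) k ξ := by
    simpa using ((hasDerivAt_id ξ).sub_const ξ₀).const_mul k
  have htn := hasDerivAt_sn_div_cn (hsn' u ▸ (hsn u).hasDerivAt)
    (hcn' u ▸ (hcn u).hasDerivAt) (hid1 u) hc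
  have hφ : HasDerivAt (fun ξ => b * (sn (k * (ξ - ξ₀)) / cn (k * (ξ - ξ₀))))
      (b * (dn u / cn u ^ 2 * k)) ξ := by
    exact (htn.comp ξ hlin).const_mul b
  rw [hφ.deriv, mul_comm _ k, ← mul_assoc, mul_pow, jacobi_tn_deriv_sq (hid1 u) (hid2 u) hc]
  exact rosenau_quartic_of_tn h₄.ne' hb hk

/-- Case II.f: with `c₂, c₄ > 0` and `c₀ = 2c₂²/(9c₄)`, the function
`φ(ξ) = b · tn(ε√(2c₂/3)(ξ − ξ₀), 1/√2)` (Jacobi tangent `tn = sn/cn` with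
modulus `m = 1/√2`, characterized by its defining ODEs and identities)
satisfies `(φ')² = c₀ + c₂φ² + c₄φ⁴` wherever `cn ≠ 0`. -/
theorem rosenau_caseIIf_tn_solution
    (c₂ c₄ ξ₀ ε : ℝ) (h₂ : 0 < c₂) (h₄ : 0 < c₄) (hε : ε = 1 ∨ ε = -1)
    (sn cn dn : ℝ → ℝ)
    (hsn : Differentiable ℝ sn) (hcn : Differentiable ℝ cn)
    (hdn : Differentiable ℝ dn)
    (hsn' : ∀ x, deriv sn x = cn x * dn x)
    (hcn' : ∀ x, deriv cn x = -(sn x * dn x))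
    (hdn' : ∀ x, deriv dn x = -((1 / 2) * sn x * cn x))
    (hid1 : ∀ x, (sn x) ^ 2 + (cn x) ^ 2 = 1)
    (hid2 : ∀ x, (dn x) ^ 2 + (1 / 2) * (sn x) ^ 2 = 1) :
    letI b : ℝ := Real.sqrt (c₂ / (3 * c₄))
    letI φ : ℝ → ℝ := fun ξ =>
      b * (sn (ε * Real.sqrt (2 * c₂ / 3) * (ξ - ξ₀))
           / cn (ε * Real.sqrt (2 * c₂ / 3) * (ξ - ξ₀)))
    ∀ ξ : ℝ, cn (ε * Real.sqrt (2 * c₂ / 3) * (ξ - ξ₀)) ≠ 0 →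
      (deriv φ ξ) ^ 2
        = 2 * c₂ ^ 2 / (9 * c₄) + c₂ * (φ ξ) ^ 2 + c₄ * (φ ξ) ^ 4 :=
  rosenau_caseIIf_tn_solution_general c₂ c₄ ξ₀ ε h₂ h₄ hε sn cn dn hsn hcn hsn' hcn' hid1 hid2
end
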